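/- Fix a real parameter a with a < 1 and a ≠ 0, and set E(n) = (1-a)^(-n/2) for real n. The function C_11 defined in the context tends, as real n tends to 2 with n ≠ 2, to the limit ((9a^2 - 38a + 3)·ln(1-a))/(6a^2) - (73a - 6)/(12a). (This is the paper's dimension n = 2 value of the coefficient C_11 in the heat invariant E_2 of the nonminimal operator on a 2-dimensional manifold with torsion.) -/

import Mathlib

/-!
The numerator `N(n)` of `C₁₁` vanishes at `n = 2` because `E(2) = (1 - a)⁻¹`, while the
denominator is `(n - 2) · 3a²n(n + 2)`. Hence the limit is `N'(2) / (24 a²)`, and `ln (1 - a)`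
enters through `E'(n) = -E(n) ln (1 - a) / 2`.
-/

open Filter Real Topology

theorem tendsto_div_sub_mul_of_hasDerivAt {f h : ℝ → ℝ} {f' x₀ : ℝ} (hf : HasDerivAt f f' x₀)
    (hf₀ : f x₀ = 0) (hh : ContinuousAt h x₀) (hh₀ : h x₀ ≠ 0) :
    Tendsto (fun x => f x / ((x - x₀) * h x)) (𝓝[≠] x₀) (𝓝 (f' / h x₀)) := by
  have hslope := (hasDerivAt_iff_tendsto_slope.mp hf).mul
    ((hh.inv₀ hh₀).tendsto.mono_left nhdsWithin_le_nhds)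
  refine hslope.congr fun x => ?_
  simp only [slope_def_field, hf₀, sub_zero, Pi.inv_apply, div_eq_mul_inv, mul_inv]
  ring

theorem hasDerivAt_rpow_neg_half {b : ℝ} (hb : 0 < b) (x : ℝ) :
    HasDerivAt (fun n : ℝ => b ^ (-(n / 2))) (b ^ (-(x / 2)) * log b * -(1 / 2)) x :=
  (hasStrictDerivAt_const_rpow hb (-(x / 2))).hasDerivAt.comp x
    ((hasDerivAt_id x).div_const 2).neg

theorem hasDerivAt_quadratic (p q r x : ℝ) :
    HasDerivAt (fun n : ℝ => p * n ^ 2 + q * n + r) (2 * p * x + q) x := by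
  have := ((((hasDerivAt_id x).pow 2).const_mul p).add ((hasDerivAt_id x).const_mul q)).add_const r
  exact this.congr_deriv (by simp only [Nat.cast_ofNat, id_eq, mul_one]; ring)

noncomputable def c11Numerator (a n : ℝ) : ℝ :=
  (1 - a) * (1 - a) ^ (-(n / 2)) * (-9*a^2*n^2 - 18*a^2*n + 76*a*n + 152*a - 24)
    + 2 * (-13*a^2*n^2 + 6*a^2*n + 76*a^2 - 32*a*n - 88*a + 12)

theorem rpow_neg_two_div_two (b : ℝ) : b ^ (-((2 : ℝ) / 2)) = b⁻¹ := by
  norm_num [rpow_neg_one]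

theorem c11Numerator_two {a : ℝ} (ha : a ≠ 1) : c11Numerator a 2 = 0 := by
  have : 1 - a ≠ 0 := sub_ne_zero.mpr ha.symm
  rw [c11Numerator, rpow_neg_two_div_two]
  field_simp
  ring

theorem hasDerivAt_c11Numerator_two {a : ℝ} (ha : a < 1) :
    HasDerivAt (c11Numerator a) (log (1 - a) * (36*a^2 - 152*a + 12) - 146*a^2 + 12*a) 2 := by
  have hb : 0 < 1 - a := sub_pos.mpr ha
  have := ((hasDerivAt_rpow_neg_half hb 2).const_mul (1 - a) |>.mul
    (hasDerivAt_quadratic (-9*a^2) (-18*a^2 + 76*a) (152*a - 24) 2)).add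
    ((hasDerivAt_quadratic (-13*a^2) (6*a^2 - 32*a) (76*a^2 - 88*a + 12) 2).const_mul 2)
  refine (this.congr_of_eventuallyEq (.of_forall fun n => ?_)).congr_deriv ?_
  · simp only [c11Numerator, Pi.add_apply, Pi.mul_apply]
    ring
  · rw [rpow_neg_two_div_two]
    field_simp
    ring

theorem stmt_14 (a : ℝ) (ha1 : a < 1) (ha0 : a ≠ 0) :
    Filter.Tendsto
      (fun n : ℝ =>
        ((1-a) * (1 - a) ^ (-(n / 2)) * (-9*a^2*n^2 - 18*a^2*n + 76*a*n + 152*a - 24) + 2*(-13*a^2*n^2 + 6*a^2*n + 76*a^2 - 32*a*n - 88*a + 12)) / (3*a^2*(n-2)*n*(n+2)))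
      (nhdsWithin (2 : ℝ) {(2 : ℝ)}ᶜ)
      (nhds (((9*a^2 - 38*a + 3) * Real.log (1 - a)) / (6*a^2) - (73*a - 6) / (12*a))) := by
  have hlim := tendsto_div_sub_mul_of_hasDerivAt (hasDerivAt_c11Numerator_two ha1)
    (c11Numerator_two ha1.ne) (h := fun n => 3 * a ^ 2 * n * (n + 2)) (by fun_prop)
    (by positivity)
  convert hlim using 2 with n
  · simp only [c11Numerator]
    ring
  · field_simp
    ring
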